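/- arXiv:1502.06820 — 3 statements merged into one kernel-verified Lean document; each statement's English description precedes it below -/
import Mathlib

section
/- Let G=(N,L) be a directed graph with nonnegative link weights w, and let s,t be two nodes of G. Suppose every s–t path φ has a correlation coefficient satisfying 1 ≤ ρ(φ) ≤ ρ_max. Let ψ be a conventional shortest path, i.e., an s–t path minimizing the uncorrelated cost U, and let ψ_opt be an s–t path minimizing the correlated cost C, with ρ_opt = ρ(ψ_opt) and opt = C(ψ_opt). Then the correlated cost of the conventional shortest path satisfies C(ψ) ≤ (ρ_max/ρ_opt) · opt. -/
/-- A walk from `s` to `t` along the links of a directed graph with link set `E`,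
recorded as its list of visited nodes. -/
def IsPath {V : Type*} (E : Set (V × V)) (s t : V) (p : List V) : Prop :=
  p.head? = some s ∧ p.getLast? = some t ∧ p.Chain' (fun a b => (a, b) ∈ E)

/-- The uncorrelated cost of a path: the sum of the weights of its links. -/
def pathUCost {V : Type*} (w : V × V → ℝ) (p : List V) : ℝ :=
  ((p.zip p.tail).map w).sum

/-- The correlated (joint total) cost of a path under the deterministic
correlated model: its correlation coefficient times its uncorrelated cost. -/
def pathCCost {V : Type*} (ρ : List V → ℝ) (w : V × V → ℝ) (p : List V) : ℝ :=
  ρ p * pathUCost w p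

section PathCost

variable {V : Type*} (w : V × V → ℝ)

theorem pathUCost_nonneg (hw : ∀ e, 0 ≤ w e) (p : List V) : 0 ≤ pathUCost w p :=
  List.sum_nonneg fun _ hx => by
    obtain ⟨e, -, rfl⟩ := List.mem_map.mp hx
    exact hw e

variable {ρ : List V → ℝ} {p : List V}

theorem div_mul_pathCCost (c : ℝ) (hρ : ρ p ≠ 0) :
    c / ρ p * pathCCost ρ w p = c * pathUCost w p := by
  unfold pathCCost
  field_simp

end PathCost

theorem conventional_shortest_path_increasing_correlation_bound_general
    {V : Type*} (E : Set (V × V)) (w : V × V → ℝ) (hw : ∀ e, 0 ≤ w e)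
    (s t : V) (ρ : List V → ℝ) (ρmax : ℝ)
    (hρ : ∀ p, IsPath E s t p → 1 ≤ ρ p ∧ ρ p ≤ ρmax)
    (ψ ψopt : List V)
    (hψ : IsPath E s t ψ) (hψopt : IsPath E s t ψopt)
    (hmin : ∀ p, IsPath E s t p → pathUCost w ψ ≤ pathUCost w p) :
    pathCCost ρ w ψ ≤ (ρmax / ρ ψopt) * pathCCost ρ w ψopt := by
  obtain ⟨hψ_one, hψ_max⟩ := hρ ψ hψ
  have hρopt_pos : 0 < ρ ψopt := by linarith [(hρ ψopt hψopt).1]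
  calc pathCCost ρ w ψ
      ≤ ρmax * pathUCost w ψ := mul_le_mul_of_nonneg_right hψ_max (pathUCost_nonneg w hw ψ)
    _ ≤ ρmax * pathUCost w ψopt := mul_le_mul_of_nonneg_left (hmin ψopt hψopt) (by linarith)
    _ = ρmax / ρ ψopt * pathCCost ρ w ψopt := (div_mul_pathCCost w ρmax hρopt_pos.ne').symm

/-- If every `s`–`t` path has correlation coefficient between `1` and `ρmax`, then a
conventional shortest path `ψ` has correlated cost at most `(ρmax / ρopt) · opt`. -/
theorem conventional_shortest_path_increasing_correlation_bound
    {V : Type*} (E : Set (V × V)) (w : V × V → ℝ) (hw : ∀ e, 0 ≤ w e)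
    (s t : V) (ρ : List V → ℝ) (ρmax : ℝ)
    (hρ : ∀ p, IsPath E s t p → 1 ≤ ρ p ∧ ρ p ≤ ρmax)
    (ψ ψopt : List V)
    (hψ : IsPath E s t ψ) (hψopt : IsPath E s t ψopt)
    (hmin : ∀ p, IsPath E s t p → pathUCost w ψ ≤ pathUCost w p)
    (hoptmin : ∀ p, IsPath E s t p → pathCCost ρ w ψopt ≤ pathCCost ρ w p) :
    pathCCost ρ w ψ ≤ (ρmax / ρ ψopt) * pathCCost ρ w ψopt :=
  conventional_shortest_path_increasing_correlation_bound_general E w hw s t ρ ρmax hρ ψ ψopt hψ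
    hψopt hmin
end

section
/- Let G=(N,L) be a directed graph with nonnegative link weights w, and let s,t be two nodes of G. Suppose every s–t cut X has a correlation coefficient satisfying 0 < ρ_min ≤ ρ(X) ≤ ρ_max. Let X̂ be a conventional min-cut, i.e., an s–t cut minimizing the uncorrelated cost U, and let X_opt be an s–t cut minimizing the correlated cost C, with ρ_opt = ρ(X_opt) and opt = C(X_opt). Then the correlated cost of the conventional min-cut satisfies C(X̂) ≤ max(ρ_max/ρ_opt, 1/ρ_min) · opt. -/
/-- An `s`–`t` cut: a set of nodes containing `s` but not `t`. -/
def IsCut {V : Type*} (s t : V) (X : Finset V) : Prop :=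
  s ∈ X ∧ t ∉ X

/-- The uncorrelated cost of a cut `X`: the sum of the weights of its cut links,
i.e. the links `(u, v) ∈ L` with `u ∈ X` and `v ∉ X`. -/
def cutUCost {V : Type*} [DecidableEq V] (L : Finset (V × V)) (w : V × V → ℝ)
    (X : Finset V) : ℝ :=
  ∑ e ∈ L.filter (fun e => e.1 ∈ X ∧ e.2 ∉ X), w e

/-- The correlated (joint total) cost of a cut under the deterministic
correlated model: its correlation coefficient times its uncorrelated cost. -/
def cutCCost {V : Type*} [DecidableEq V] (L : Finset (V × V)) (w : V × V → ℝ)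
    (ρ : Finset V → ℝ) (X : Finset V) : ℝ :=
  ρ X * cutUCost L w X

/-!
Bounding `ρ(X̂)` by `ρmax` and using the minimality of `U(X̂)` gives
`C(X̂) ≤ ρmax · U(X̂) ≤ ρmax · U(X_opt) = (ρmax / ρopt) · opt`.
-/

section

variable {V : Type*} [DecidableEq V] (L : Finset (V × V)) (w : V × V → ℝ)

theorem cutUCost_nonneg (hw : ∀ e, 0 ≤ w e) (X : Finset V) : 0 ≤ cutUCost L w X :=
  Finset.sum_nonneg fun e _ => hw e

theorem cutCCost_le_mul_cutUCost (hw : ∀ e, 0 ≤ w e) {ρ : Finset V → ℝ} {r : ℝ}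
    {X : Finset V} (hX : ρ X ≤ r) : cutCCost L w ρ X ≤ r * cutUCost L w X :=
  mul_le_mul_of_nonneg_right hX (cutUCost_nonneg L w hw X)

theorem mul_cutUCost_eq_div_mul_cutCCost {ρ : Finset V → ℝ} {X : Finset V} (hX : ρ X ≠ 0)
    (r : ℝ) : r * cutUCost L w X = r / ρ X * cutCCost L w ρ X := by
  rw [cutCCost, ← mul_assoc, div_mul_cancel₀ r hX]

theorem cutCCost_le_div_mul_cutCCost_of_cutUCost_le (hw : ∀ e, 0 ≤ w e)
    {ρ : Finset V → ℝ} {r : ℝ} {X Y : Finset V} (hXr : ρ X ≤ r) (hρX : 0 ≤ ρ X)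
    (hρY : 0 < ρ Y) (hXY : cutUCost L w X ≤ cutUCost L w Y) :
    cutCCost L w ρ X ≤ r / ρ Y * cutCCost L w ρ Y :=
  calc cutCCost L w ρ X ≤ r * cutUCost L w X := cutCCost_le_mul_cutUCost L w hw hXr
    _ ≤ r * cutUCost L w Y := mul_le_mul_of_nonneg_left hXY (hρX.trans hXr)
    _ = r / ρ Y * cutCCost L w ρ Y := mul_cutUCost_eq_div_mul_cutCCost L w hρY.ne' r

end

theorem conventional_min_cut_correlation_bound_general
    {V : Type*} [DecidableEq V]
    (L : Finset (V × V)) (w : V × V → ℝ) (hw : ∀ e, 0 ≤ w e)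
    (s t : V) (ρ : Finset V → ℝ) (ρmin ρmax : ℝ) (hρmin : 0 < ρmin)
    (hρ : ∀ X, IsCut s t X → ρmin ≤ ρ X ∧ ρ X ≤ ρmax)
    (Xhat Xopt : Finset V)
    (hXhat : IsCut s t Xhat) (hXopt : IsCut s t Xopt)
    (hmin : ∀ Y, IsCut s t Y → cutUCost L w Xhat ≤ cutUCost L w Y) :
    cutCCost L w ρ Xhat ≤ max (ρmax / ρ Xopt) (1 / ρmin) * cutCCost L w ρ Xopt := by
  obtain ⟨hρhat_min, hρhat_max⟩ := hρ Xhat hXhat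
  have hρopt : 0 < ρ Xopt := hρmin.trans_le (hρ Xopt hXopt).1
  have hopt_nonneg : 0 ≤ cutCCost L w ρ Xopt :=
    mul_nonneg hρopt.le (cutUCost_nonneg L w hw Xopt)
  calc cutCCost L w ρ Xhat ≤ ρmax / ρ Xopt * cutCCost L w ρ Xopt :=
        cutCCost_le_div_mul_cutCCost_of_cutUCost_le L w hw hρhat_max
          (hρmin.le.trans hρhat_min) hρopt (hmin Xopt hXopt)
    _ ≤ max (ρmax / ρ Xopt) (1 / ρmin) * cutCCost L w ρ Xopt :=
        mul_le_mul_of_nonneg_right (le_max_left _ _) hopt_nonneg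

/-- If every `s`–`t` cut has correlation coefficient between `ρmin > 0` and `ρmax`, then a
conventional min-cut `X̂` has correlated cost at most
`max (ρmax / ρopt) (1 / ρmin) · opt`. -/
theorem conventional_min_cut_correlation_bound
    {V : Type*} [Fintype V] [DecidableEq V]
    (L : Finset (V × V)) (w : V × V → ℝ) (hw : ∀ e, 0 ≤ w e)
    (s t : V) (ρ : Finset V → ℝ) (ρmin ρmax : ℝ) (hρmin : 0 < ρmin)
    (hρ : ∀ X, IsCut s t X → ρmin ≤ ρ X ∧ ρ X ≤ ρmax)
    (Xhat Xopt : Finset V)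
    (hXhat : IsCut s t Xhat) (hXopt : IsCut s t Xopt)
    (hmin : ∀ Y, IsCut s t Y → cutUCost L w Xhat ≤ cutUCost L w Y)
    (hoptmin : ∀ Y, IsCut s t Y → cutCCost L w ρ Xopt ≤ cutCCost L w ρ Y) :
    cutCCost L w ρ Xhat ≤ max (ρmax / ρ Xopt) (1 / ρmin) * cutCCost L w ρ Xopt :=
  conventional_min_cut_correlation_bound_general L w hw s t ρ ρmin ρmax hρmin hρ Xhat Xopt hXhat
    hXopt hmin
end

section
/- Let G=(N,L) be a directed graph on a finite node set with strictly positive link weights w, and let s,t be two nodes. If C ⊆ L is a minimum-weight s–t disconnecting link set (a min-cut separating s and t), then C never contains two links of the form (u,v) and (v,y); that is, there are no nodes u, v, y such that both (u,v) ∈ C and (v,y) ∈ C. -/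
/-- `ReachableAvoiding L C s v`: there is a directed walk from `s` to `v` that uses
only links of `L` not in `C`. -/
def ReachableAvoiding {V : Type*} (L C : Finset (V × V)) (s v : V) : Prop :=
  Relation.ReflTransGen (fun a b => (a, b) ∈ L ∧ (a, b) ∉ C) s v

/-- `C` is an `s`–`t` disconnecting link set: removing the links of `C` leaves no
directed path from `s` to `t`. -/
def Disconnects {V : Type*} (L : Finset (V × V)) (s t : V) (C : Finset (V × V)) : Prop :=
  ¬ ReachableAvoiding L C s t

/-!
Let `R` be the set of nodes reachable from `s` avoiding a cut `C`. If `(u, v), (v, y) ∈ C`,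
then either `v ∈ R`, and the link `(u, v)` can be restored without enlarging `R`, or `v ∉ R`,
and the link `(v, y)` can be restored without enlarging `R`. Either way a proper subset of `C`
still separates `s` from `t`, and it is strictly lighter since weights are positive.
-/

theorem ReachableAvoiding.of_erase {V : Type*} [DecidableEq V] {L C : Finset (V × V)}
    {s a b x : V} (hab : ReachableAvoiding L C s a → ReachableAvoiding L C s b)
    (h : ReachableAvoiding L (C.erase (a, b)) s x) : ReachableAvoiding L C s x := by
  induction h with
  | refl => exact .refl
  | @tail c d _ hstep ih =>
    obtain ⟨hL, hnotin⟩ := hstep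
    by_cases hC : (c, d) ∈ C
    · have hcd : (c, d) = (a, b) :=
        by_contra fun hne => hnotin (Finset.mem_erase.mpr ⟨hne, hC⟩)
      obtain ⟨rfl, rfl⟩ := Prod.mk.inj hcd
      exact hab ih
    · exact ih.tail ⟨hL, hC⟩

theorem Disconnects.erase {V : Type*} [DecidableEq V] {L C : Finset (V × V)} {s t a b : V}
    (hC : Disconnects L s t C)
    (hab : ReachableAvoiding L C s a → ReachableAvoiding L C s b) :
    Disconnects L s t (C.erase (a, b)) :=
  fun h => hC (h.of_erase hab)

theorem not_disconnects_erase_of_min {V : Type*} [DecidableEq V] {L : Finset (V × V)}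
    {w : V × V → ℝ} (hw : ∀ e ∈ L, 0 < w e) {s t : V} {C : Finset (V × V)} (hCL : C ⊆ L)
    (hmin : ∀ D ⊆ L, Disconnects L s t D → ∑ e ∈ C, w e ≤ ∑ e ∈ D, w e)
    {e : V × V} (he : e ∈ C) : ¬ Disconnects L s t (C.erase e) := fun hdisc =>
  (hmin _ ((C.erase_subset e).trans hCL) hdisc).not_gt
    (Finset.sum_erase_lt_of_pos he (hw e (hCL he)))

theorem min_cut_no_adjacent_links_general
    {V : Type*}
    (L : Finset (V × V)) (w : V × V → ℝ) (hw : ∀ e ∈ L, 0 < w e)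
    (s t : V) (C : Finset (V × V)) (hCL : C ⊆ L)
    (hdisc : Disconnects L s t C)
    (hmin : ∀ D ⊆ L, Disconnects L s t D → ∑ e ∈ C, w e ≤ ∑ e ∈ D, w e) :
    ¬ ∃ u v y : V, (u, v) ∈ C ∧ (v, y) ∈ C := by
  classical
  rintro ⟨u, v, y, huv, hvy⟩
  by_cases hv : ReachableAvoiding L C s v
  · exact not_disconnects_erase_of_min hw hCL hmin huv (hdisc.erase fun _ => hv)
  · exact not_disconnects_erase_of_min hw hCL hmin hvy (hdisc.erase fun h => absurd h hv)

/-- A minimum-weight `s`–`t` disconnecting link set never contains two links of the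
form `(u, v)` and `(v, y)`. -/
theorem min_cut_no_adjacent_links
    {V : Type*} [Fintype V] [DecidableEq V]
    (L : Finset (V × V)) (w : V × V → ℝ) (hw : ∀ e ∈ L, 0 < w e)
    (s t : V) (C : Finset (V × V)) (hCL : C ⊆ L)
    (hdisc : Disconnects L s t C)
    (hmin : ∀ D ⊆ L, Disconnects L s t D → ∑ e ∈ C, w e ≤ ∑ e ∈ D, w e) :
    ¬ ∃ u v y : V, (u, v) ∈ C ∧ (v, y) ∈ C :=
  min_cut_no_adjacent_links_general L w hw s t C hCL hdisc hmin
end
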